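/- arXiv:2402.14585 — 4 statements merged into one kernel-verified Lean document; each statement's English description precedes it below -/
import Mathlib

section
/- Let w ∈ ℝ₊^E with strictly positive entries and c ∈ ℝ₊^E. The minimizer of Δ(v, w) over all v ∈ ℝ₊^E subject to Σ_{i∈[E]} v_i c_i = 1 is given componentwise by v_i = w_i exp(-λ c_i), where λ is chosen so that Σ_i c_i w_i exp(-λ c_i) = 1 (assuming such λ exists). -/
/-- The unnormalized relative entropy `Δ(u,v) = Σᵢ uᵢ ln(uᵢ/vᵢ) - ‖u‖₁ + ‖v‖₁`. -/
noncomputable def urel {E : ℕ} (u v : Fin E → ℝ) : ℝ :=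
  (∑ i, u i * Real.log (u i / v i)) - (∑ i, u i) + (∑ i, v i)

lemma urel_key (a b w : ℝ) (ha : 0 ≤ a) (hb : 0 < b) (hw : 0 < w) :
    a - b ≤ a * Real.log (a / w) - a * Real.log (b / w) := by
  rcases eq_or_lt_of_le ha with h | h
  · simp [← h]
    linarith
  · have heq : a * Real.log (a / w) - a * Real.log (b / w) = a * Real.log (a / b) := by
      rw [Real.log_div h.ne' hw.ne', Real.log_div hb.ne' hw.ne',
        Real.log_div h.ne' hb.ne']
      ring
    rw [heq]
    have h1 := Real.log_le_sub_one_of_pos (show 0 < b / a by positivity)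
    rw [Real.log_div hb.ne' h.ne'] at h1
    rw [Real.log_div h.ne' hb.ne']
    have h2 : a * (Real.log b - Real.log a) ≤ a * (b / a - 1) :=
      mul_le_mul_of_nonneg_left h1 h.le
    have h3 : a * (b / a - 1) = b - a := by field_simp
    nlinarith

/-- Projection step of CBA: `vᵢ = wᵢ exp(-λ cᵢ)` minimizes `Δ(v,w)` over the
nonnegative vectors satisfying `Σᵢ vᵢ cᵢ = 1`, where `λ` satisfies
`Σᵢ cᵢ wᵢ exp(-λ cᵢ) = 1`. -/
theorem stmt_7 {E : ℕ} (w c : Fin E → ℝ) (hw : ∀ i, 0 < w i) (hc : ∀ i, 0 ≤ c i)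
    (lam : ℝ) (hlam : ∑ i, c i * w i * Real.exp (-lam * c i) = 1) :
    (∑ i, (w i * Real.exp (-lam * c i)) * c i = 1) ∧
    ∀ v : Fin E → ℝ, (∀ i, 0 ≤ v i) → (∑ i, v i * c i = 1) →
      urel (fun i => w i * Real.exp (-lam * c i)) w ≤ urel v w := by
  set vs : Fin E → ℝ := fun i => w i * Real.exp (-lam * c i) with hvs
  have hvspos : ∀ i, 0 < vs i := fun i => mul_pos (hw i) (Real.exp_pos _)
  have h1 : ∑ i, vs i * c i = 1 := by
    rw [← hlam]; exact Finset.sum_congr rfl fun i _ => by simp [hvs]; ring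
  refine ⟨h1, ?_⟩
  intro v hv hvc
  have hlog : ∀ i, Real.log (vs i / w i) = -lam * c i := by
    intro i
    simp only [hvs]
    rw [mul_comm, mul_div_assoc, div_self (hw i).ne', mul_one, Real.log_exp]
  have hsum : ∑ i, (v i - vs i) ≤
      ∑ i, (v i * Real.log (v i / w i) - v i * Real.log (vs i / w i)) :=
    Finset.sum_le_sum fun i _ => urel_key (v i) (vs i) (w i) (hv i) (hvspos i) (hw i)
  have hB : ∑ i, vs i * Real.log (vs i / w i) = -lam := by
    calc ∑ i, vs i * Real.log (vs i / w i) = ∑ i, -lam * (vs i * c i) := by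
          exact Finset.sum_congr rfl fun i _ => by rw [hlog i]; ring
      _ = -lam * ∑ i, vs i * c i := by rw [Finset.mul_sum]
      _ = -lam := by rw [h1, mul_one]
  have hC : ∑ i, v i * Real.log (vs i / w i) = -lam := by
    calc ∑ i, v i * Real.log (vs i / w i) = ∑ i, -lam * (v i * c i) := by
          exact Finset.sum_congr rfl fun i _ => by rw [hlog i]; ring
      _ = -lam * ∑ i, v i * c i := by rw [Finset.mul_sum]
      _ = -lam := by rw [hvc, mul_one]
  rw [Finset.sum_sub_distrib] at hsum
  rw [Finset.sum_sub_distrib, hC] at hsum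
  simp only [urel, hvs] at *
  linarith [hsum, hB]
end

section
/- Fix a trial with expert actions e^1,…,e^E ∈ [0,1]^K, ‖e^i‖₁ = c_i ≤ 1, projected weights w̃ ∈ ℝ₊^E satisfying Σ_i w̃_i c_i ≤ 1, and s := Σ_i w̃_i e^i with s_a > 0 for all a. Let a_t be drawn with P[a_t = a] = s_a (abstaining with probability 1 - ‖s‖₁), fix r ∈ [-1,1]^K, and let r̂_a := 1 - 𝟙[a = a_t](1 - r_{a_t})/s_{a_t} (r̂ := 1 on abstention). Then Σ_{i∈[E]} w̃_i E[(e^i · r̂)²] ≤ 6K + 1. -/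
/-- Second-moment bound (poeq1) in the CBA analysis:
`Σᵢ w̃ᵢ E[(eⁱ·r̂)²] ≤ 6K + 1` where the expectation is over the drawn action
(`a` with probability `s a`, abstention with probability `1 - ‖s‖₁`, on which
the estimator `r̂` is the all-ones vector so `eⁱ·r̂ = ‖eⁱ‖₁`). -/
theorem stmt_10 {E K : ℕ} (e : Fin E → Fin K → ℝ) (w : Fin E → ℝ) (r : Fin K → ℝ)
    (he0 : ∀ i a, 0 ≤ e i a) (he1 : ∀ i a, e i a ≤ 1) (hes : ∀ i, ∑ a, e i a ≤ 1)
    (hw : ∀ i, 0 ≤ w i) (hwc : ∑ i, w i * ∑ a, e i a ≤ 1)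
    (s : Fin K → ℝ) (hs : ∀ a, s a = ∑ i, w i * e i a) (hspos : ∀ a, 0 < s a)
    (hr : ∀ a, -1 ≤ r a ∧ r a ≤ 1) :
    ∑ i, w i *
      ((∑ a, s a * (∑ b, e i b * (1 - if b = a then (1 - r a) / s a else 0)) ^ 2)
        + (1 - ∑ a, s a) * (∑ b, e i b) ^ 2)
      ≤ 6 * (K : ℝ) + 1 := by
  set c : Fin E → ℝ := fun i => ∑ a, e i a with hc
  have hc0 : ∀ i, 0 ≤ c i := fun i => Finset.sum_nonneg fun a _ => he0 i a
  -- Step 1: per-expert bound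
  have key : ∀ i, ((∑ a, s a * (∑ b, e i b * (1 - if b = a then (1 - r a) / s a else 0)) ^ 2)
        + (1 - ∑ a, s a) * (∑ b, e i b) ^ 2) ≤ c i + 4 * ∑ a, e i a / s a := by
    intro i
    have hdot : ∀ a : Fin K, (∑ b, e i b * (1 - if b = a then (1 - r a) / s a else 0))
        = c i - e i a * ((1 - r a) / s a) := by
      intro a
      have : (∑ b, e i b * (1 - if b = a then (1 - r a) / s a else 0))
          = ∑ b, (e i b - if b = a then e i b * ((1 - r a) / s a) else 0) := by
        apply Finset.sum_congr rfl
        intro b _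
        by_cases h : b = a <;> simp [h] <;> ring
      rw [this, Finset.sum_sub_distrib, Finset.sum_ite_eq' Finset.univ a
        (fun b => e i b * ((1 - r a) / s a))]
      simp [hc]
    have hterm : ∀ a : Fin K, s a * (c i - e i a * ((1 - r a) / s a)) ^ 2
        = s a * c i ^ 2 - 2 * c i * (e i a * (1 - r a)) + (e i a) ^ 2 * (1 - r a) ^ 2 / s a := by
      intro a
      have h := (hspos a).ne'
      field_simp
      ring
    have expand : ((∑ a, s a * (∑ b, e i b * (1 - if b = a then (1 - r a) / s a else 0)) ^ 2)
        + (1 - ∑ a, s a) * (∑ b, e i b) ^ 2)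
        = c i ^ 2 - 2 * c i * ∑ a, e i a * (1 - r a)
          + ∑ a, (e i a) ^ 2 * (1 - r a) ^ 2 / s a := by
      have h1 : (∑ a, s a * (∑ b, e i b * (1 - if b = a then (1 - r a) / s a else 0)) ^ 2)
          = ∑ a, (s a * c i ^ 2 - 2 * c i * (e i a * (1 - r a))
              + (e i a) ^ 2 * (1 - r a) ^ 2 / s a) := by
        apply Finset.sum_congr rfl
        intro a _
        rw [hdot a, hterm a]
      rw [h1]
      simp only [Finset.sum_add_distrib, Finset.sum_sub_distrib, ← Finset.sum_mul,
        ← Finset.mul_sum]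
      rw [hc]
      ring
    rw [expand]
    have h1 : c i ^ 2 ≤ c i := by
      have := hes i
      nlinarith [hc0 i]
    have h2 : 0 ≤ 2 * c i * ∑ a, e i a * (1 - r a) := by
      apply mul_nonneg (by linarith [hc0 i])
      apply Finset.sum_nonneg
      intro a _
      exact mul_nonneg (he0 i a) (by linarith [(hr a).2])
    have h3 : ∑ a, (e i a) ^ 2 * (1 - r a) ^ 2 / s a ≤ ∑ a, 4 * (e i a / s a) := by
      apply Finset.sum_le_sum
      intro a _
      rw [div_le_iff₀ (hspos a)]
      have hsa := (hspos a).ne'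
      have h4e : 4 * (e i a / s a) * s a = 4 * e i a := by field_simp
      rw [h4e]
      have h5 : (1 - r a) ^ 2 ≤ 4 := by nlinarith [(hr a).1, (hr a).2]
      have h6 : e i a ^ 2 ≤ e i a := by nlinarith [he0 i a, he1 i a]
      nlinarith [mul_le_mul h6 h5 (sq_nonneg (1 - r a)) (he0 i a)]
    have h4 : ∑ a, 4 * (e i a / s a) = 4 * ∑ a, e i a / s a := by
      rw [Finset.mul_sum]
    linarith
  -- Step 2: sum the bound
  have step2 : ∑ i, w i *
      ((∑ a, s a * (∑ b, e i b * (1 - if b = a then (1 - r a) / s a else 0)) ^ 2)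
        + (1 - ∑ a, s a) * (∑ b, e i b) ^ 2)
      ≤ ∑ i, w i * (c i + 4 * ∑ a, e i a / s a) := by
    apply Finset.sum_le_sum
    intro i _
    exact mul_le_mul_of_nonneg_left (key i) (hw i)
  -- Step 3: compute the RHS
  have hswap : ∑ i, w i * ∑ a, e i a / s a = (K : ℝ) := by
    have hsw : ∑ i, w i * ∑ a, e i a / s a = ∑ a : Fin K, (∑ i, w i * e i a) / s a := by
      calc ∑ i, w i * ∑ a, e i a / s a = ∑ i, ∑ a, w i * e i a / s a := by
            simp_rw [Finset.mul_sum, mul_div_assoc]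
        _ = ∑ a, ∑ i, w i * e i a / s a := Finset.sum_comm
        _ = ∑ a, (∑ i, w i * e i a) / s a := by simp_rw [Finset.sum_div]
    rw [hsw]
    have : ∀ a : Fin K, (∑ i, w i * e i a) / s a = 1 := by
      intro a
      rw [← hs a, div_self (hspos a).ne']
    simp [this]
  have hrhs : ∑ i, w i * (c i + 4 * ∑ a, e i a / s a)
      = (∑ i, w i * c i) + 4 * (K : ℝ) := by
    simp only [mul_add, Finset.sum_add_distrib]
    rw [show ∑ i, w i * (4 * ∑ a, e i a / s a) = 4 * ∑ i, w i * ∑ a, e i a / s a by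
      rw [Finset.mul_sum]; apply Finset.sum_congr rfl; intro i _; ring]
    rw [hswap]
  have hK : (0 : ℝ) ≤ (K : ℝ) := Nat.cast_nonneg K
  calc _ ≤ ∑ i, w i * (c i + 4 * ∑ a, e i a / s a) := step2
    _ = (∑ i, w i * c i) + 4 * (K : ℝ) := hrhs
    _ ≤ 1 + 4 * (K : ℝ) := by have := hwc; simp only [hc]; linarith
    _ ≤ 6 * (K : ℝ) + 1 := by linarith
end

section
/- With the setup of the CBA variance analysis, for each expert i: e^i · r̂ ≤ c_i + 2 e^i_{a_t}/s_{a_t}, where c_i = ‖e^i‖₁, and consequently E[(e^i · r̂)²] ≤ c_i² + Σ_{a∈[K]} (2 e^i_a c_i + 4 (e^i_a)²/s_a). -/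
/-- Per-expert bounds in the CBA variance analysis: for each expert `i` with
confidence `cᵢ = ‖eⁱ‖₁`, (1) on the event that action `a` is drawn,
`eⁱ·r̂ ≤ cᵢ + 2 eⁱₐ/sₐ`, and (2) the second moment of `eⁱ·r̂` (expectation over the
drawn action, with abstention probability `1 - ‖s‖₁` on which `r̂ ≡ 1`) is at most
`cᵢ² + Σₐ (2 eⁱₐ cᵢ + 4 (eⁱₐ)²/sₐ)`. -/
theorem stmt_11 {K : ℕ} (e : Fin K → ℝ) (s : Fin K → ℝ) (r : Fin K → ℝ)
    (he0 : ∀ a, 0 ≤ e a) (he1 : ∀ a, e a ≤ 1) (hes : ∑ a, e a ≤ 1)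
    (hs0 : ∀ a, 0 < s a) (hs1 : ∀ a, s a ≤ 1) (hssum : ∑ a, s a ≤ 1)
    (hr : ∀ a, -1 ≤ r a ∧ r a ≤ 1) :
    (∀ a, (∑ b, e b * (1 - if b = a then (1 - r a) / s a else 0))
        ≤ (∑ b, e b) + 2 * e a / s a) ∧
    ((∑ a, s a * (∑ b, e b * (1 - if b = a then (1 - r a) / s a else 0)) ^ 2)
        + (1 - ∑ a, s a) * (∑ b, e b) ^ 2
      ≤ (∑ b, e b) ^ 2 + ∑ a, (2 * e a * (∑ b, e b) + 4 * (e a) ^ 2 / s a)) := by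
  set c : ℝ := ∑ b, e b with hc
  have hc0 : 0 ≤ c := Finset.sum_nonneg fun b _ => he0 b
  have key : ∀ a : Fin K, (∑ b, e b * (1 - if b = a then (1 - r a) / s a else 0))
      = c - e a * ((1 - r a) / s a) := by
    intro a
    have : ∀ b : Fin K, e b * (1 - if b = a then (1 - r a) / s a else 0)
        = e b - (if b = a then e b * ((1 - r a) / s a) else 0) := by
      intro b; split <;> ring
    rw [Finset.sum_congr rfl fun b _ => this b, Finset.sum_sub_distrib,
      Finset.sum_ite_eq' Finset.univ a (fun b => e b * ((1 - r a) / s a))]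
    simp [hc]
  constructor
  · intro a
    rw [key a]
    have h1 : 0 ≤ e a * ((1 - r a) / s a) :=
      mul_nonneg (he0 a) (div_nonneg (by linarith [(hr a).2]) (hs0 a).le)
    have h2 : 0 ≤ 2 * e a / s a :=
      div_nonneg (by linarith [he0 a]) (hs0 a).le
    linarith
  · have hterm : ∀ a : Fin K, s a * (c - e a * ((1 - r a) / s a)) ^ 2
        ≤ s a * c ^ 2 + (2 * e a * c + 4 * (e a) ^ 2 / s a) := by
      intro a
      have hsa := hs0 a
      have hq0 : 0 ≤ 1 - r a := by linarith [(hr a).2]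
      have hq2 : 1 - r a ≤ 2 := by linarith [(hr a).1]
      have hea := he0 a
      have expand : s a * (c - e a * ((1 - r a) / s a)) ^ 2
          = s a * c ^ 2 - 2 * c * e a * (1 - r a) + (e a) ^ 2 * (1 - r a) ^ 2 / s a := by
        field_simp
        ring
      rw [expand]
      have h1 : 0 ≤ 2 * c * e a * (1 - r a) :=
        mul_nonneg (mul_nonneg (by linarith) hea) hq0
      have h2 : (e a) ^ 2 * (1 - r a) ^ 2 / s a ≤ 4 * (e a) ^ 2 / s a := by
        gcongr ?_ / s a
        nlinarith [mul_nonneg (sq_nonneg (e a))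
          (mul_nonneg (by linarith : (0:ℝ) ≤ 2 - (1 - r a))
            (by linarith : (0:ℝ) ≤ 2 + (1 - r a)))]
      have h3 : 0 ≤ 2 * e a * c := mul_nonneg (by linarith) hc0
      linarith
    calc (∑ a, s a * (∑ b, e b * (1 - if b = a then (1 - r a) / s a else 0)) ^ 2)
          + (1 - ∑ a, s a) * c ^ 2
        = (∑ a, s a * (c - e a * ((1 - r a) / s a)) ^ 2) + (1 - ∑ a, s a) * c ^ 2 := by
          rw [Finset.sum_congr rfl fun a _ => by rw [key a]]
      _ ≤ (∑ a, (s a * c ^ 2 + (2 * e a * c + 4 * (e a) ^ 2 / s a)))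
          + (1 - ∑ a, s a) * c ^ 2 := by
          gcongr with a _
          exact hterm a
      _ = c ^ 2 + ∑ a, (2 * e a * c + 4 * (e a) ^ 2 / s a) := by
          rw [Finset.sum_add_distrib, ← Finset.sum_mul]
          ring
end

section
/- Let D be a complete binary tree with N = 2ⁿ leaves, and φ, ψ : D → ℝ₊ functions such that for every node v, ψ(v) · Π_{v' ∈ anc(v)} φ(v') = Σ_{z ∈ des(v)} ŷ(z), where anc(v) includes v and des(v) is the set of leaf-descendants of v. Then for any leaf q, the value Σ over all leaves z not to the left of q of ŷ(z) equals σ₀ computed by the Query recursion: σ_n = ψ(γ_n)φ(γ_n) at the leaf γ_n = q, and climbing, σ_i = φ(γ_i)(σ_{i+1} + ψ(rc(γ_i))φ(rc(γ_i))) if γ_{i+1} is the left child of γ_i, else σ_i = φ(γ_i)σ_{i+1}. -/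
/-- The Query recursion, climbing a complete binary tree with `2^n` leaves from the
leaf `q` (at depth `n`) to the root. Nodes at depth `i` are indexed by `j < 2^i`; the
ancestor of leaf `q` at depth `i` is `q / 2^(n-i)`, and the children of node `(i,j)`
are `(i+1, 2j)` and `(i+1, 2j+1)`. `queryRec n q φ ψ k` is the value `σ_{n-k}`. -/
noncomputable def queryRec (n q : ℕ) (φ ψ : ℕ → ℕ → ℝ) : ℕ → ℝ
  | 0 => ψ n q * φ n q
  | k + 1 =>
    if (q / 2 ^ k) % 2 = 0 then
      φ (n - (k + 1)) (q / 2 ^ (k + 1)) *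
        (queryRec n q φ ψ k
          + ψ (n - k) (2 * (q / 2 ^ (k + 1)) + 1) * φ (n - k) (2 * (q / 2 ^ (k + 1)) + 1))
    else
      φ (n - (k + 1)) (q / 2 ^ (k + 1)) * queryRec n q φ ψ k

lemma queryRec_key (n q : ℕ) (φ ψ : ℕ → ℕ → ℝ) (yhat : ℕ → ℝ)
    (hinv : ∀ i ≤ n, ∀ j < 2 ^ i,
      ψ i j * ∏ i' ∈ Finset.range (i + 1), φ i' (j / 2 ^ (i - i'))
        = ∑ z ∈ Finset.range (2 ^ n), if z / 2 ^ (n - i) = j then yhat z else 0)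
    (q_lt : q < 2 ^ n) :
    ∀ k ≤ n, queryRec n q φ ψ k * ∏ i' ∈ Finset.range (n - k), φ i' (q / 2 ^ (n - i'))
      = ∑ z ∈ Finset.Ico q (2 ^ n), if z / 2 ^ k = q / 2 ^ k then yhat z else 0 := by
  intro k
  induction k with
  | zero =>
    intro _
    have E := hinv n le_rfl q q_lt
    rw [Finset.prod_range_succ] at E
    simp only [Nat.sub_self, pow_zero, Nat.div_one] at E
    simp only [pow_zero, Nat.div_one]
    rw [queryRec]
    calc ψ n q * φ n q * ∏ i' ∈ Finset.range (n - 0), φ i' (q / 2 ^ (n - i'))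
        = ψ n q * ((∏ i' ∈ Finset.range n, φ i' (q / 2 ^ (n - i'))) * φ n q) := by
          rw [Nat.sub_zero]; ring
      _ = ∑ z ∈ Finset.range (2 ^ n), if z = q then yhat z else 0 := E
      _ = yhat q := by
          rw [Finset.sum_ite_eq' (Finset.range (2 ^ n)) q yhat,
            if_pos (Finset.mem_range.mpr q_lt)]
      _ = ∑ z ∈ Finset.Ico q (2 ^ n), if z = q then yhat z else 0 := by
          rw [Finset.sum_ite_eq' (Finset.Ico q (2 ^ n)) q yhat,
            if_pos (Finset.mem_Ico.mpr ⟨le_rfl, q_lt⟩)]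
  | succ k ih =>
    intro hk1
    have hk : k ≤ n := by omega
    have IH := ih hk
    -- the parent node index
    set j := q / 2 ^ (k + 1) with hj
    have hdd : ∀ z : ℕ, z / 2 ^ (k + 1) = z / 2 ^ k / 2 := by
      intro z; rw [pow_succ, Nat.div_div_eq_div_mul]
    have hqd : q / 2 ^ k / 2 = j := (hdd q).symm
    -- split the product at the parent
    have hsplit : ∏ i' ∈ Finset.range (n - k), φ i' (q / 2 ^ (n - i'))
        = (∏ i' ∈ Finset.range (n - (k + 1)), φ i' (q / 2 ^ (n - i'))) *
            φ (n - (k + 1)) j := by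
      rw [show n - k = (n - (k + 1)) + 1 by omega, Finset.prod_range_succ,
        show n - (n - (k + 1)) = k + 1 by omega]
    rw [queryRec]
    by_cases hpar : (q / 2 ^ k) % 2 = 0
    · -- even case : q's ancestor at depth n-k is the left child of j
      have hq2 : q / 2 ^ k = 2 * j := by omega
      have hjlt : 2 * j + 1 < 2 ^ (n - k) := by
        have : j < 2 ^ (n - (k + 1)) := by
          rw [hj]
          rw [Nat.div_lt_iff_lt_mul (by positivity)]
          calc q < 2 ^ n := q_lt
            _ = 2 ^ (n - (k + 1)) * 2 ^ (k + 1) := by rw [← pow_add]; congr 1; omega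
        calc 2 * j + 1 < 2 * (j + 1) := by omega
          _ ≤ 2 * 2 ^ (n - (k + 1)) := by omega
          _ = 2 ^ (n - k) := by rw [← pow_succ']; congr 1; omega
      have E := hinv (n - k) (by omega) (2 * j + 1) hjlt
      rw [show n - (n - k) = k by omega] at E
      -- the ancestors of the right sibling agree with those of q
      have hanc : ∏ i' ∈ Finset.range (n - k + 1), φ i' ((2 * j + 1) / 2 ^ (n - k - i'))
          = ((∏ i' ∈ Finset.range (n - (k + 1)), φ i' (q / 2 ^ (n - i'))) *
              φ (n - (k + 1)) j) * φ (n - k) (2 * j + 1) := by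
        rw [Finset.prod_range_succ, Nat.sub_self, pow_zero, Nat.div_one, ← hsplit]
        congr 1
        apply Finset.prod_congr rfl
        intro i' hi'
        rw [Finset.mem_range] at hi'
        congr 1
        rw [show n - k - i' = (n - k - i' - 1) + 1 by omega, pow_succ',
          ← Nat.div_div_eq_div_mul, show (2 * j + 1) / 2 = j by omega, hj,
          Nat.div_div_eq_div_mul, ← pow_add]
        congr 2
        omega
      rw [hanc] at E
      rw [if_pos hpar]
      -- sum identity
      have h0 : ∀ z ∈ Finset.Ico 0 q, (if z / 2 ^ k = 2 * j + 1 then yhat z else 0) = 0 := by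
        intro z hz
        rw [Finset.mem_Ico] at hz
        have hle : z / 2 ^ k ≤ q / 2 ^ k := Nat.div_le_div_right (le_of_lt hz.2)
        rw [if_neg (by omega)]
      have h1 : ∑ z ∈ Finset.range (2 ^ n), (if z / 2 ^ k = 2 * j + 1 then yhat z else 0)
          = ∑ z ∈ Finset.Ico q (2 ^ n), (if z / 2 ^ k = 2 * j + 1 then yhat z else 0) := by
        rw [Finset.range_eq_Ico,
          ← Finset.sum_Ico_consecutive _ (Nat.zero_le q) (le_of_lt q_lt),
          Finset.sum_eq_zero h0, zero_add]
      have hsum : (∑ z ∈ Finset.Ico q (2 ^ n), if z / 2 ^ k = q / 2 ^ k then yhat z else 0)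
          + ∑ z ∈ Finset.range (2 ^ n), (if z / 2 ^ k = 2 * j + 1 then yhat z else 0)
          = ∑ z ∈ Finset.Ico q (2 ^ n), if z / 2 ^ (k + 1) = j then yhat z else 0 := by
        rw [h1, ← Finset.sum_add_distrib]
        apply Finset.sum_congr rfl
        intro z _
        rw [hdd z, hq2]
        by_cases e0 : z / 2 ^ k = 2 * j
        · rw [if_pos e0, if_neg (by omega), if_pos (by omega)]; ring
        · by_cases e1 : z / 2 ^ k = 2 * j + 1
          · rw [if_neg e0, if_pos e1, if_pos (by omega)]; ring
          · rw [if_neg e0, if_neg e1, if_neg (by omega)]; ring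
      calc φ (n - (k + 1)) j *
            (queryRec n q φ ψ k + ψ (n - k) (2 * j + 1) * φ (n - k) (2 * j + 1)) *
            ∏ i' ∈ Finset.range (n - (k + 1)), φ i' (q / 2 ^ (n - i'))
          = queryRec n q φ ψ k *
              ((∏ i' ∈ Finset.range (n - (k + 1)), φ i' (q / 2 ^ (n - i'))) *
                φ (n - (k + 1)) j)
            + ψ (n - k) (2 * j + 1) *
              (((∏ i' ∈ Finset.range (n - (k + 1)), φ i' (q / 2 ^ (n - i'))) *
                φ (n - (k + 1)) j) * φ (n - k) (2 * j + 1)) := by ring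
        _ = (∑ z ∈ Finset.Ico q (2 ^ n), if z / 2 ^ k = q / 2 ^ k then yhat z else 0)
            + ∑ z ∈ Finset.range (2 ^ n), (if z / 2 ^ k = 2 * j + 1 then yhat z else 0) := by
            rw [E, ← hsplit, IH]
        _ = ∑ z ∈ Finset.Ico q (2 ^ n), if z / 2 ^ (k + 1) = j then yhat z else 0 := hsum
    · -- odd case : q's ancestor at depth n-k is the right child of j
      have hq2 : q / 2 ^ k = 2 * j + 1 := by omega
      rw [if_neg hpar]
      have hsum : (∑ z ∈ Finset.Ico q (2 ^ n), if z / 2 ^ k = q / 2 ^ k then yhat z else 0)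
          = ∑ z ∈ Finset.Ico q (2 ^ n), if z / 2 ^ (k + 1) = j then yhat z else 0 := by
        apply Finset.sum_congr rfl
        intro z hz
        rw [Finset.mem_Ico] at hz
        have hle : q / 2 ^ k ≤ z / 2 ^ k := Nat.div_le_div_right hz.1
        rw [hdd z, hq2]
        by_cases e1 : z / 2 ^ k = 2 * j + 1
        · rw [if_pos e1, if_pos (by omega)]
        · rw [if_neg e1, if_neg (by omega)]
      calc φ (n - (k + 1)) j * queryRec n q φ ψ k *
            ∏ i' ∈ Finset.range (n - (k + 1)), φ i' (q / 2 ^ (n - i'))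
          = queryRec n q φ ψ k *
              ((∏ i' ∈ Finset.range (n - (k + 1)), φ i' (q / 2 ^ (n - i'))) *
                φ (n - (k + 1)) j) := by ring
        _ = ∑ z ∈ Finset.Ico q (2 ^ n), if z / 2 ^ k = q / 2 ^ k then yhat z else 0 := by
            rw [← hsplit, IH]
        _ = _ := hsum

/-- Correctness of the Query subroutine: if for every node `(i,j)` of the tree,
`ψ(i,j) · Π_{ancestors (i',j')} φ(i',j') = Σ_{leaf descendants z} ŷ(z)`, then for any
leaf `q` the recursion computes the sum of `ŷ` over all leaves not to the left of `q`. -/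
theorem stmt_17 (n : ℕ) (φ ψ : ℕ → ℕ → ℝ) (yhat : ℕ → ℝ)
    (hφ : ∀ i j, 0 ≤ φ i j) (hψ : ∀ i j, 0 ≤ ψ i j) (hy : ∀ z, 0 ≤ yhat z)
    (hinv : ∀ i ≤ n, ∀ j < 2 ^ i,
      ψ i j * ∏ i' ∈ Finset.range (i + 1), φ i' (j / 2 ^ (i - i'))
        = ∑ z ∈ Finset.range (2 ^ n), if z / 2 ^ (n - i) = j then yhat z else 0)
    (q : ℕ) (hq : q < 2 ^ n) :
    queryRec n q φ ψ n = ∑ z ∈ Finset.Ico q (2 ^ n), yhat z := by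
  have key := queryRec_key n q φ ψ yhat hinv hq n le_rfl
  rw [Nat.sub_self, Finset.range_zero, Finset.prod_empty, mul_one] at key
  rw [key]
  apply Finset.sum_congr rfl
  intro z hz
  rw [Finset.mem_Ico] at hz
  rw [if_pos]
  rw [Nat.div_eq_of_lt hz.2, Nat.div_eq_of_lt hq]
end
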